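/- Let n ≥ 1. Then, as formal power series in q_1, q_2: (q_1;q_1)_n (q_2;q_2)_n · Σ_{S = (s^1,…,s^n) ∈ (ℕ^2)^n with s^1 ≤ s^2 ≤ ⋯ ≤ s^n lexicographically} q^S = Σ_{σ ∈ S_n} q_1^{comaj(σ^{−1})} q_2^{comaj(σ)}. Consequently, setting q_1 = q_2 = q, ((q;q)_n)^2 · Σ_{S with s^1 ≤ ⋯ ≤ s^n} q^{|S|} = Σ_{σ ∈ S_n} q^{comaj(σ) + comaj(σ^{−1})}, where |S| is the sum of all entries of S. (The latter is the graded multiplicity of the trivial representation — equivalently of s_n — in H_n^{⊗2}.) -/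

import Mathlib

open scoped Classical

namespace RomeroComaj

noncomputable section

/-- `Seq r` is `ℕ^r`, the type of sequences of natural numbers of length `r`. -/
abbrev Seq (r : ℕ) := Fin r → ℕ

/-- strict lexicographic order on `ℕ^r`. -/
def lexLt {r : ℕ} (a b : Seq r) : Prop :=
  ∃ i : Fin r, (∀ j : Fin r, j < i → a j = b j) ∧ a i < b i

/-- weak lexicographic order on `ℕ^r`. -/
def lexLe {r : ℕ} (a b : Seq r) : Prop :=
  lexLt a b ∨ a = b

/-- `RNbr R a b` : the (1-indexed) indices `a` and `b` are `R`-neighbors,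
i.e. (for `a < b`) all of `a, a+1, …, b-1` lie in `R`. -/
def RNbr (R : Finset ℕ) (a b : ℕ) : Prop :=
  ∀ t ∈ Finset.Ico (min a b) (max a b), t ∈ R

/-- the value `σ_i` of the one-line notation of `σ`, both position `i` and
the value being 1-indexed (junk value `0` outside `1 ≤ i ≤ n`). -/
def pget {n : ℕ} (σ : Equiv.Perm (Fin n)) (i : ℕ) : ℕ :=
  if h : i - 1 < n then (σ ⟨i - 1, h⟩).val + 1 else 0

/-- the sequence `s^i` of a list `S = (s^1, …, s^n)`, `i` being 1-indexed. -/
def sget {n r : ℕ} (S : Fin n → Seq r) (i : ℕ) : Seq r :=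
  if h : i - 1 < n then S ⟨i - 1, h⟩ else 0

/-- the condition for `i` to belong to `Des_{R,S}(σ)`:
`s^{σ_i} > s^{σ_{i+1}} − χ(σ_{i+1} < σ_i ∧ σ_{i+1} ≁_R σ_i) − χ(σ_{i+1} > σ_i ∧ σ_i ∼_R σ_{i+1})`. -/
def desCond {n r : ℕ} (R : Finset ℕ) (S : Fin n → Seq r) (σ : Equiv.Perm (Fin n)) (i : ℕ) :
    Prop :=
  if (pget σ (i+1) < pget σ i ∧ ¬ RNbr R (pget σ (i+1)) (pget σ i)) ∨
      (pget σ i < pget σ (i+1) ∧ RNbr R (pget σ i) (pget σ (i+1)))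
  then lexLe (sget S (pget σ (i+1))) (sget S (pget σ i))
  else lexLt (sget S (pget σ (i+1))) (sget S (pget σ i))

/-- `Des_{R,S}(σ) ⊆ {1, …, n−1}` (1-indexed positions). -/
def DesSet {n r : ℕ} (R : Finset ℕ) (S : Fin n → Seq r) (σ : Equiv.Perm (Fin n)) : Finset ℕ :=
  (Finset.Icc 1 (n-1)).filter (fun i => desCond R S σ i)

/-- `Comaj_{R,S}(σ) = ∑_{i ∈ Des_{R,S}(σ)} (n − i)`. -/
def Comaj {n r : ℕ} (R : Finset ℕ) (S : Fin n → Seq r) (σ : Equiv.Perm (Fin n)) : ℕ :=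
  ∑ i ∈ DesSet R S σ, (n - i)

/-- `s^i` is read before `s^j` in the reading order of `S` (with respect to `R`);
`i, j` are 1-indexed. -/
def readBefore {n r : ℕ} (R : Finset ℕ) (S : Fin n → Seq r) (i j : ℕ) : Prop :=
  lexLt (sget S i) (sget S j) ∨
    (sget S i = sget S j ∧ ((i < j ∧ ¬ RNbr R i j) ∨ (j < i ∧ RNbr R j i)))

/-- `IsReading R S σ` says that the reading permutation `σ_R(S)` equals `σ`,
i.e. `σ` lists `1, …, n` in the reading order of `S`. -/
def IsReading {n r : ℕ} (R : Finset ℕ) (S : Fin n → Seq r) (σ : Equiv.Perm (Fin n)) : Prop :=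
  ∀ i ∈ Finset.Icc 1 (n-1), readBefore R S (pget σ i) (pget σ (i+1))

/-- the operator `Z_{R,σ} : (ℕ^r)^n → (ℕ^{r+1})^n`, prepending to `s^v` the number of
descents of `σ` (w.r.t. `R, S`) at positions strictly before the position of `v` in `σ`. -/
def Zop {n r : ℕ} (R : Finset ℕ) (σ : Equiv.Perm (Fin n)) (S : Fin n → Seq r) :
    Fin n → Seq (r+1) :=
  fun v => Fin.cons ((DesSet R S σ ∩ Finset.Ico 1 ((σ.symm v).val + 1)).card) (S v)

/-- `Zvec R σs i = Z_{R,σ^i} ⋯ Z_{R,σ^1}(∅)` where `σ^{j+1} = σs j`. -/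
def Zvec {n : ℕ} (R : Finset ℕ) (σs : ℕ → Equiv.Perm (Fin n)) : (i : ℕ) → Fin n → Seq i
  | 0 => fun _ => (0 : Seq 0)
  | (i+1) => Zop R (σs i) (Zvec R σs i)

/-- extend a finite vector of permutations to `ℕ`, by the identity. -/
def extFun {n r : ℕ} (σv : Fin r → Equiv.Perm (Fin n)) : ℕ → Equiv.Perm (Fin n) :=
  fun j => if h : j < r then σv ⟨j, h⟩ else 1

/-- `comajI R k σv i = comaj^i_R(σ⃗)` for `1 ≤ i ≤ k`, where `σ⃗ = σv` has length `k−1`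
and `σ^k = ε`. -/
def comajI {n : ℕ} (R : Finset ℕ) (k : ℕ) (σv : Fin (k-1) → Equiv.Perm (Fin n)) (i : ℕ) : ℕ :=
  Comaj R (Zvec R (extFun σv) (i-1)) (extFun σv (i-1))

/-- the exponent of the monomial `q^S` for `S ∈ (ℕ^r)^n` : the (0-indexed) variable `i`
(that is, `q_{i+1}`) records the `(r−i)`-th (0-indexed: `r−1−i`-th) coordinates. -/
def expOf {n r : ℕ} (S : Fin n → Seq r) : Fin r →₀ ℕ :=
  Finsupp.equivFunOnFinite.symm (fun i => ∑ j : Fin n, S j (Fin.rev i))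

/-- the formal power series whose coefficient at a monomial `d` counts the elements
`a : α` satisfying `P a d`. -/
def countSeriesP {σty α : Type*} (P : α → (σty →₀ ℕ) → Prop) : MvPowerSeries σty ℤ :=
  fun d => (Nat.card {a : α // P a d} : ℤ)

/-- `∑_{S ∈ (ℕ^r)^n, P S} q^S`. -/
def countSeries {n r : ℕ} (P : (Fin n → Seq r) → Prop) : MvPowerSeries (Fin r) ℤ :=
  countSeriesP (fun S d => P S ∧ expOf S = d)

/-- the Pochhammer factor `(q_i; q_i)_n = ∏_{j=1}^n (1 − q_i^j)`. -/
def pochOne {r : ℕ} (n : ℕ) (i : Fin r) : MvPowerSeries (Fin r) ℤ :=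
  ∏ j ∈ Finset.Icc 1 n, (1 - (MvPowerSeries.X i : MvPowerSeries (Fin r) ℤ) ^ j)

/-- `∏_{i=1}^{r} (q_i; q_i)_n`. -/
def pochAll (n r : ℕ) : MvPowerSeries (Fin r) ℤ :=
  ∏ i : Fin r, pochOne n i

/-- the exponent of `q_1^{comaj¹_R(σ⃗)} ⋯ q_k^{comaj^k_R(σ⃗)}`. -/
def comajExp {n : ℕ} (R : Finset ℕ) (k : ℕ) (σv : Fin (k-1) → Equiv.Perm (Fin n)) :
    Fin k →₀ ℕ :=
  Finsupp.equivFunOnFinite.symm (fun i => comajI R k σv (i.val + 1))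

/-- A standard Young tableau of shape `μ` (with `μ.card` cells), recorded by the
position `pos i` of each (1-indexed) entry `i ∈ {1, …, μ.card}`; entries increase
left-to-right along rows and down columns (matrix convention), and `pos` is a
bijection from `{1, …, μ.card}` onto the cells of `μ` (normalized by `0` outside). -/
structure SYT (μ : YoungDiagram) where
  pos : ℕ → ℕ × ℕ
  mem : ∀ i ∈ Finset.Icc 1 μ.card, pos i ∈ μ
  inj : ∀ i ∈ Finset.Icc 1 μ.card, ∀ j ∈ Finset.Icc 1 μ.card, pos i = pos j → i = j
  surj : ∀ c ∈ μ, ∃ i ∈ Finset.Icc 1 μ.card, pos i = c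
  row_inc : ∀ i ∈ Finset.Icc 1 μ.card, ∀ j ∈ Finset.Icc 1 μ.card,
    (pos i).1 = (pos j).1 → (pos i).2 < (pos j).2 → i < j
  col_inc : ∀ i ∈ Finset.Icc 1 μ.card, ∀ j ∈ Finset.Icc 1 μ.card,
    (pos i).2 = (pos j).2 → (pos i).1 < (pos j).1 → i < j
  junk : ∀ i, i ∉ Finset.Icc 1 μ.card → pos i = 0

/-- `des(T)` : the set of `i ∈ {1, …, n−1}` such that `i+1` lies in a strictly
higher row of `T` than `i` (in matrix convention: a strictly larger row index). -/
def desSYT {μ : YoungDiagram} (T : SYT μ) : Finset ℕ :=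
  (Finset.Icc 1 (μ.card - 1)).filter (fun i => (T.pos i).1 < (T.pos (i+1)).1)

/-- the ordinary descent set `des(π) = {i : π_i > π_{i+1}}` (1-indexed). -/
def desPerm {n : ℕ} (π : Equiv.Perm (Fin n)) : Finset ℕ :=
  (Finset.Icc 1 (n-1)).filter (fun i => pget π (i+1) < pget π i)

/-- `comaj(π) = ∑_{i ∈ des(π)} (n − i)`. -/
def comajP {n : ℕ} (π : Equiv.Perm (Fin n)) : ℕ :=
  ∑ i ∈ desPerm π, (n - i)



/-!
Write a lexicographically sorted `S` as rows `(a_j, b_j)`. Stably sorting the second column gives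
a permutation `σ`, sending `j` to the rank of `b_j`; the sorted column `b ∘ σ⁻¹` is then
`σ⁻¹`-compatible and the first column `a` is `σ`-compatible, where a `τ`-compatible sequence is a
weakly increasing one that increases strictly across every descent of `τ`. This is a bijection, so
the series of sorted `S` is `∑_σ F_{σ⁻¹}(q_1) F_σ(q_2)` with `F_τ` the series of `τ`-compatible
sequences. Subtracting from each entry the number of descents of `τ` before it turns
`τ`-compatible sequences into weakly increasing ones, whose series is `1 / (q;q)_n`, so
`(q;q)_n F_τ = q^{comaj τ}`. The one-variable identity follows in the same way once the total
degree is split into the two column sums.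
-/

section General

open Finset

lemma finite_of_sum_le {ι : Type*} [Fintype ι] {P : (ι → ℕ) → Prop} (m : ℕ)
    (h : ∀ a, P a → ∑ i, a i ≤ m) : Finite {a : ι → ℕ // P a} :=
  Finite.of_injective (β := ι → Fin (m + 1))
    (fun a i => ⟨a.1 i, Nat.lt_succ_of_le
      ((single_le_sum (fun _ _ => Nat.zero_le _) (mem_univ i)).trans (h a.1 a.2))⟩)
    fun _ _ hab => Subtype.ext (funext fun i => congrArg Fin.val (congrFun hab i))

instance finite_subtype_and_sum_eq {ι : Type*} [Fintype ι] (P : (ι → ℕ) → Prop) (m : ℕ) :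
    Finite {a : ι → ℕ // P a ∧ ∑ i, a i = m} :=
  finite_of_sum_le m fun _ ha => ha.2.le

lemma card_eq_sum_card_fiber {α β : Type*} {P : α → Prop} (f : α → β) (s : Finset β)
    [∀ b, Finite {a // P a ∧ f a = b}] :
    Nat.card {a // P a ∧ f a ∈ s} = ∑ b ∈ s, Nat.card {a // P a ∧ f a = b} := by
  rw [← sum_coe_sort s, ← Nat.card_sigma]
  exact Nat.card_congr
    { toFun := fun a => ⟨⟨f a.1, a.2.2⟩, a.1, a.2.1, rfl⟩
      invFun := fun x => ⟨x.2.1, x.2.2.1, by rw [x.2.2.2]; exact x.1.2⟩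
      left_inv := fun _ => rfl
      right_inv := fun x => Sigma.subtype_ext (Subtype.ext x.2.2.2) rfl }

lemma card_filter_le_val {n : ℕ} (p : ℕ) : #{i : Fin n | p ≤ (i : ℕ)} = n - p := by
  rw [← card_map Fin.valEmbedding, ← Nat.card_Ico]
  congr 1
  ext k
  simp only [mem_map, mem_filter, mem_univ, true_and, Fin.valEmbedding_apply, mem_Ico]
  exact ⟨fun ⟨a, ha, hk⟩ => hk ▸ ⟨ha, a.isLt⟩, fun ⟨h1, h2⟩ => ⟨⟨k, h2⟩, h1, rfl⟩⟩

variable {σ R : Type*} [CommSemiring R]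

def ofVar (i : σ) : PowerSeries R →ₐ[R] MvPowerSeries σ R :=
  MvPowerSeries.rename fun _ : Unit => i

lemma ofVar_X (i : σ) : ofVar i (PowerSeries.X : PowerSeries R) = MvPowerSeries.X i :=
  MvPowerSeries.rename_X _ ()

lemma coeff_single_ofVar (i : σ) (f : PowerSeries R) (a : ℕ) :
    MvPowerSeries.coeff (Finsupp.single i a) (ofVar i f) = PowerSeries.coeff a f := by
  have := MvPowerSeries.coeff_embDomain_rename ⟨fun _ : Unit => i, fun _ _ _ => rfl⟩ f
    (Finsupp.single () a)
  rwa [Finsupp.embDomain_single] at this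

lemma coeff_ofVar_eq_zero (i : σ) (f : PowerSeries R) {u : σ →₀ ℕ}
    (hu : u ∉ Set.range (Finsupp.mapDomain fun _ : Unit => i)) :
    MvPowerSeries.coeff u (ofVar i f) = 0 :=
  MvPowerSeries.coeff_rename_eq_zero _ _ hu

lemma coeff_ofVar_mul_ofVar {i j : σ} (hij : i ≠ j) (f g : PowerSeries R) (a b : ℕ) :
    MvPowerSeries.coeff (Finsupp.single i a + Finsupp.single j b) (ofVar i f * ofVar j g) =
      PowerSeries.coeff a f * PowerSeries.coeff b g := by
  rw [MvPowerSeries.coeff_mul, sum_eq_single (Finsupp.single i a, Finsupp.single j b)]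
  · rw [coeff_single_ofVar, coeff_single_ofVar]
  · rintro ⟨u, v⟩ huv hne
    dsimp only
    by_cases hu : u ∈ Set.range (Finsupp.mapDomain fun _ : Unit => i)
    · by_cases hv : v ∈ Set.range (Finsupp.mapDomain fun _ : Unit => j)
      · obtain ⟨u, rfl⟩ := hu
        obtain ⟨v, rfl⟩ := hv
        rw [Finsupp.unique_single u, Finsupp.unique_single v, Finsupp.mapDomain_single,
          Finsupp.mapDomain_single] at huv hne
        have hi := DFunLike.congr_fun (mem_antidiagonal.1 huv) i
        have hj := DFunLike.congr_fun (mem_antidiagonal.1 huv) j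
        simp [hij, hij.symm] at hi hj
        simp [hi, hj] at hne
      · rw [coeff_ofVar_eq_zero j g hv, mul_zero]
    · rw [coeff_ofVar_eq_zero i f hu, zero_mul]
  · simp

end General

section CompatibleSequences

open Finset PowerSeries

variable {n : ℕ}

/-- Equivalently (`compatible_iff_monotone_sub`): `a` is weakly increasing, and strictly
increasing across each descent of `τ`. -/
def Compatible (τ : Equiv.Perm (Fin n)) (a : Fin n → ℕ) : Prop :=
  StrictMono fun i => (toLex (a i, τ i) : ℕ ×ₗ Fin n)

/-- `desPerm` uses `1`-indexed positions: the descent `p` lies between the (`0`-indexed) entries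
`p - 1` and `p`, so this counts the descents of `τ` before the entry `i`. -/
def numDesLE (τ : Equiv.Perm (Fin n)) (i : Fin n) : ℕ :=
  #{p ∈ desPerm τ | p ≤ (i : ℕ)}

lemma pget_val_add_one (τ : Equiv.Perm (Fin n)) (i : Fin n) : pget τ (i + 1) = τ i + 1 := by
  simp [pget]

lemma mem_desPerm_iff_of_covBy (τ : Equiv.Perm (Fin n)) {i j : Fin n} (h : i ⋖ j) :
    (j : ℕ) ∈ desPerm τ ↔ τ j < τ i := by
  rw [Fin.covBy_iff, Nat.covBy_iff_add_one_eq] at h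
  have := j.isLt
  rw [desPerm, mem_filter, mem_Icc, pget_val_add_one, ← h, pget_val_add_one, Fin.lt_def]
  omega

lemma numDesLE_of_covBy (τ : Equiv.Perm (Fin n)) {i j : Fin n} (h : i ⋖ j) :
    numDesLE τ j = numDesLE τ i + if τ j < τ i then 1 else 0 := by
  rw [← if_congr (mem_desPerm_iff_of_covBy τ h) rfl rfl]
  rw [Fin.covBy_iff, Nat.covBy_iff_add_one_eq] at h
  have hsplit : {p ∈ desPerm τ | p ≤ (j : ℕ)} =
      {p ∈ desPerm τ | p ≤ (i : ℕ)} ∪ {p ∈ desPerm τ | p = j} := by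
    rw [← filter_or]
    exact filter_congr fun p _ => by omega
  rw [numDesLE, numDesLE, hsplit, card_union_of_disjoint, filter_eq']
  · split_ifs <;> simp
  · exact disjoint_filter.2 fun p _ hp => by omega

lemma sum_numDesLE (τ : Equiv.Perm (Fin n)) : ∑ i, numDesLE τ i = comajP τ := by
  simp only [numDesLE, card_filter, comajP]
  rw [sum_comm]
  exact sum_congr rfl fun p _ => by rw [← card_filter, card_filter_le_val]

lemma compatible_iff_monotone_sub (τ : Equiv.Perm (Fin n)) (a : Fin n → ℕ) :
    Compatible τ a ↔ Monotone fun i => (a i : ℤ) - numDesLE τ i := by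
  rw [Compatible, strictMono_iff_forall_covBy, monotone_iff_forall_covBy]
  refine forall₂_congr fun i j => forall_congr' fun h => ?_
  rw [Prod.Lex.toLex_lt_toLex, numDesLE_of_covBy τ h]
  dsimp only
  have := Fin.val_injective.ne (τ.injective.ne h.lt.ne)
  split_ifs with hd <;> simp only [Fin.lt_def] at hd ⊢ <;> push_cast <;> omega

lemma numDesLE_le {τ : Equiv.Perm (Fin n)} {a : Fin n → ℕ} (ha : Compatible τ a) (i : Fin n) :
    numDesLE τ i ≤ a i := by
  have h0 : numDesLE τ ⟨0, i.pos⟩ = 0 := by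
    simp only [numDesLE, card_eq_zero, filter_eq_empty_iff, desPerm, mem_filter, mem_Icc]
    omega
  have := (compatible_iff_monotone_sub τ a).1 ha (show (⟨0, i.pos⟩ : Fin n) ≤ i from Nat.zero_le _)
  simp only [h0] at this
  omega

lemma comajP_le_sum {τ : Equiv.Perm (Fin n)} {a : Fin n → ℕ} (ha : Compatible τ a) :
    comajP τ ≤ ∑ i, a i :=
  sum_numDesLE τ ▸ sum_le_sum fun i _ => numDesLE_le ha i

def compatibleEquivMonotone (τ : Equiv.Perm (Fin n)) (m : ℕ) :
    {a : Fin n → ℕ // Compatible τ a ∧ ∑ i, a i = m + comajP τ} ≃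
      {a : Fin n → ℕ // Monotone a ∧ ∑ i, a i = m} where
  toFun a := ⟨a.1 - numDesLE τ, fun i j hij => by
      have := (compatible_iff_monotone_sub τ a.1).1 a.2.1 hij
      have := numDesLE_le a.2.1 i
      have := numDesLE_le a.2.1 j
      simp only [Pi.sub_apply] at *
      omega, by
      simp only [Pi.sub_apply]
      rw [sum_tsub_distrib _ fun i _ => numDesLE_le a.2.1 i, a.2.2, sum_numDesLE,
        Nat.add_sub_cancel]⟩
  invFun a := ⟨a.1 + numDesLE τ, (compatible_iff_monotone_sub τ _).2 fun i j hij => by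
      simpa using a.2.1 hij, by
      simp only [Pi.add_apply]
      rw [sum_add_distrib, a.2.2, sum_numDesLE]⟩
  left_inv a := by ext; simp [Nat.sub_add_cancel (numDesLE_le a.2.1 _)]
  right_inv a := by ext; simp

lemma monotone_cons_zero {a : Fin n → ℕ} (ha : Monotone a) :
    Monotone (Fin.cons 0 a : Fin (n + 1) → ℕ) := by
  intro i j hij
  cases i using Fin.cases with
  | zero => simp
  | succ i =>
    cases j using Fin.cases with
    | zero => exact absurd hij (Fin.succ_pos i).not_ge
    | succ j => simpa using ha (Fin.succ_le_succ_iff.1 hij)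

lemma one_le_of_monotone {a : Fin (n + 1) → ℕ} (ha : Monotone a) (h0 : a 0 ≠ 0)
    (i : Fin (n + 1)) : 1 ≤ a i :=
  (Nat.one_le_iff_ne_zero.2 h0).trans (ha (Fin.zero_le i))

def monotoneSuccEquiv (n m : ℕ) :
    {a : Fin (n + 1) → ℕ // Monotone a ∧ ∑ i, a i = m} ≃
      {a : Fin n → ℕ // Monotone a ∧ ∑ i, a i = m} ⊕
        {a : Fin (n + 1) → ℕ // Monotone a ∧ ∑ i, a i + (n + 1) = m} where
  toFun a := if h : a.1 0 = 0 then .inl ⟨Fin.tail a.1, a.2.1.comp Fin.strictMono_succ.monotone, by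
      simpa [Fin.sum_univ_succ, h, Fin.tail] using a.2.2⟩
    else .inr ⟨a.1 - 1, fun i j hij => Nat.sub_le_sub_right (a.2.1 hij) 1, by
      have := (sum_congr rfl fun i _ =>
        Nat.sub_add_cancel (one_le_of_monotone a.2.1 h i)).trans a.2.2
      simpa [sum_add_distrib] using this⟩
  invFun := Sum.elim (fun a => ⟨Fin.cons 0 a.1, monotone_cons_zero a.2.1, by
      simpa [Fin.sum_univ_succ] using a.2.2⟩)
    fun a => ⟨a.1 + 1, a.2.1.add_const 1, by simpa [sum_add_distrib] using a.2.2⟩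
  left_inv a := by
    by_cases h : a.1 0 = 0
    · ext i
      simp only [h, dite_true, Sum.elim_inl]
      rw [← h, Fin.cons_self_tail]
    · ext i
      simp only [h, dite_false, Sum.elim_inr, Pi.add_apply, Pi.sub_apply, Pi.one_apply]
      exact Nat.sub_add_cancel (one_le_of_monotone a.2.1 h i)
  right_inv a := by
    rcases a with a | a
    · simp [Fin.tail_cons]
    · simp

def qPochhammer (n : ℕ) : PowerSeries ℤ :=
  ∏ j ∈ Icc 1 n, (1 - X ^ j)

def compatSeries (τ : Equiv.Perm (Fin n)) : PowerSeries ℤ :=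
  mk fun m => Nat.card {a : Fin n → ℕ // Compatible τ a ∧ ∑ i, a i = m}

def monotoneSeries (n : ℕ) : PowerSeries ℤ :=
  mk fun m => Nat.card {a : Fin n → ℕ // Monotone a ∧ ∑ i, a i = m}

lemma compatSeries_eq (τ : Equiv.Perm (Fin n)) :
    compatSeries τ = X ^ comajP τ * monotoneSeries n := by
  ext m
  rw [coeff_X_pow_mul', compatSeries, monotoneSeries, coeff_mk]
  split_ifs with h
  · obtain ⟨k, rfl⟩ := Nat.exists_eq_add_of_le' h
    rw [Nat.card_congr (compatibleEquivMonotone τ k), Nat.add_sub_cancel, coeff_mk]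
  · have : IsEmpty {a : Fin n → ℕ // Compatible τ a ∧ ∑ i, a i = m} :=
      ⟨fun a => h (a.2.2 ▸ comajP_le_sum a.2.1)⟩
    rw [Nat.card_of_isEmpty, Nat.cast_zero]

lemma monotoneSeries_zero : monotoneSeries 0 = 1 := by
  ext m
  rw [monotoneSeries, coeff_mk, coeff_one]
  split_ifs with h
  · subst h
    rw [Nat.card_congr (Equiv.subtypeUnivEquiv fun a => ⟨Subsingleton.monotone a, by simp⟩)]
    simp
  · have : IsEmpty {a : Fin 0 → ℕ // Monotone a ∧ ∑ i, a i = m} :=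
      ⟨fun a => h (by simpa using a.2.2.symm)⟩
    rw [Nat.card_of_isEmpty, Nat.cast_zero]

lemma monotoneSeries_succ (n : ℕ) :
    monotoneSeries (n + 1) = monotoneSeries n + X ^ (n + 1) * monotoneSeries (n + 1) := by
  ext m
  have := finite_of_sum_le (P := fun a : Fin (n + 1) → ℕ => Monotone a ∧ ∑ i, a i + (n + 1) = m)
    m fun a ha => ha.2 ▸ Nat.le_add_right _ _
  rw [map_add, coeff_X_pow_mul', monotoneSeries, monotoneSeries, coeff_mk, coeff_mk,
    Nat.card_congr (monotoneSuccEquiv n m), Nat.card_sum, Nat.cast_add]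
  congr 1
  split_ifs with h
  · rw [coeff_mk]
    exact congrArg _ (Nat.card_congr (Equiv.subtypeEquivRight fun a =>
      and_congr_right fun _ => ⟨fun _ => by omega, fun _ => by omega⟩))
  · have : IsEmpty {a : Fin (n + 1) → ℕ // Monotone a ∧ ∑ i, a i + (n + 1) = m} :=
      ⟨fun a => h (by omega)⟩
    rw [Nat.card_of_isEmpty, Nat.cast_zero]

lemma qPochhammer_mul_monotoneSeries (n : ℕ) : qPochhammer n * monotoneSeries n = 1 := by
  induction n with
  | zero => simp [qPochhammer, monotoneSeries_zero]
  | succ n ih =>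
    have step : (1 - X ^ (n + 1)) * monotoneSeries (n + 1) = monotoneSeries n := by
      rw [sub_mul, one_mul, sub_eq_iff_eq_add]
      exact monotoneSeries_succ n
    rw [qPochhammer, prod_Icc_succ_top (by omega), ← qPochhammer, mul_assoc, step, ih]

lemma qPochhammer_mul_compatSeries (τ : Equiv.Perm (Fin n)) :
    qPochhammer n * compatSeries τ = X ^ comajP τ := by
  rw [compatSeries_eq, mul_left_comm, qPochhammer_mul_monotoneSeries, mul_one]

end CompatibleSequences

section Standardization

open Finset

variable {n : ℕ}

lemma lexLe_iff_toLex_le (u v : Seq 2) :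
    lexLe u v ↔ toLex (u 0, u 1) ≤ toLex (v 0, v 1) := by
  rw [Prod.Lex.toLex_le_toLex, lexLe, lexLt, Fin.exists_fin_two, funext_iff, Fin.forall_fin_two]
  simp only [Fin.forall_fin_two, Fin.not_lt_zero, lt_self_iff_false, Fin.zero_lt_one,
    false_imp_iff, true_imp_iff, true_and, and_true]
  omega

lemma sget_add_one {r : ℕ} (S : Fin n → Seq r) {k : ℕ} (hk : k < n) :
    sget S (k + 1) = S ⟨k, hk⟩ := by
  simp [sget, hk]

lemma forall_Icc_sget_iff {r : ℕ} (R : Seq r → Seq r → Prop) (S : Fin n → Seq r) :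
    (∀ i ∈ Icc 1 (n - 1), R (sget S i) (sget S (i + 1))) ↔
      ∀ i j : Fin n, i ⋖ j → R (S i) (S j) := by
  simp only [Fin.covBy_iff, Nat.covBy_iff_add_one_eq, mem_Icc]
  constructor
  · rintro h i j hij
    have hj : j = ⟨i + 1, by omega⟩ := Fin.ext hij.symm
    have := h (i + 1) ⟨by omega, by omega⟩
    rwa [sget_add_one S i.isLt, sget_add_one S (by omega), Fin.eta, ← hj] at this
  · intro h k hk
    obtain ⟨k, rfl⟩ : ∃ k', k = k' + 1 := ⟨k - 1, by omega⟩
    rw [sget_add_one S (by omega), sget_add_one S (by omega)]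
    exact h _ _ rfl

lemma sorted_iff_monotone (S : Fin n → Seq 2) :
    (∀ i ∈ Icc 1 (n - 1), lexLe (sget S i) (sget S (i + 1))) ↔
      Monotone fun j => toLex (S j 0, S j 1) := by
  rw [forall_Icc_sget_iff, monotone_iff_forall_covBy]
  simp only [lexLe_iff_toLex_le]

lemma compatible_iff_eq_sort (σ : Equiv.Perm (Fin n)) (c : Fin n → ℕ) :
    Compatible σ c ↔ σ = Tuple.sort (c ∘ ⇑σ⁻¹) := by
  rw [Tuple.eq_sort_iff', Compatible]
  change _ ↔ StrictMono fun i => toLex ((c ∘ ⇑σ⁻¹) (σ i), σ i)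
  simp only [Function.comp_apply, Equiv.Perm.inv_def, Equiv.symm_apply_apply]

lemma sort_comp_eq_inv {σ : Equiv.Perm (Fin n)} {c : Fin n → ℕ} (hc : Compatible σ⁻¹ c) :
    Tuple.sort (c ∘ σ) = σ⁻¹ := by
  rw [compatible_iff_eq_sort, inv_inv] at hc
  exact hc.symm

lemma toLex_lt_iff_sort_inv_lt (b : Fin n → ℕ) (k l : Fin n) :
    toLex (b k, k) < toLex (b l, l) ↔ (Tuple.sort b)⁻¹ k < (Tuple.sort b)⁻¹ l := by
  have := (compatible_iff_eq_sort (Tuple.sort b) (b ∘ Tuple.sort b)).2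
    (by simp [Function.comp_assoc])
  simpa using this.lt_iff_lt (a := (Tuple.sort b)⁻¹ k) (b := (Tuple.sort b)⁻¹ l)

lemma monotone_toLex_iff_compatible (a b : Fin n → ℕ) :
    Monotone (fun k => toLex (a k, b k)) ↔ Compatible (Tuple.sort b)⁻¹ a := by
  rw [monotone_iff_forall_lt, Compatible, StrictMono]
  refine forall₂_congr fun k l => forall_congr' fun hkl => ?_
  rw [Prod.Lex.toLex_le_toLex, Prod.Lex.toLex_lt_toLex, ← toLex_lt_iff_sort_inv_lt,
    Prod.Lex.toLex_lt_toLex]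
  simp only [hkl, and_true, ← le_iff_lt_or_eq]

/-- The exponents of `q_1` and `q_2` in `q^S`. -/
def bidegree (S : Fin n → Seq 2) : ℕ × ℕ :=
  (∑ j, S j 1, ∑ j, S j 0)

def sortedEquiv (b : ℕ × ℕ) :
    {S : Fin n → Seq 2 // Monotone (fun j => toLex (S j 0, S j 1)) ∧ bidegree S = b} ≃
      {x : Equiv.Perm (Fin n) × (Fin n → ℕ) × (Fin n → ℕ) //
        (Compatible x.1⁻¹ x.2.1 ∧ ∑ i, x.2.1 i = b.1) ∧
          (Compatible x.1 x.2.2 ∧ ∑ i, x.2.2 i = b.2)} where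
  toFun S := ⟨((Tuple.sort fun j => S.1 j 1)⁻¹, (fun j => S.1 j 1) ∘ Tuple.sort fun j => S.1 j 1,
      fun j => S.1 j 0),
    ⟨by rw [inv_inv, compatible_iff_eq_sort]; simp [Function.comp_assoc],
      (Equiv.sum_comp _ _).trans (Prod.mk.inj S.2.2).1⟩,
    (monotone_toLex_iff_compatible _ _).1 S.2.1, (Prod.mk.inj S.2.2).2⟩
  invFun x := ⟨fun j => ![x.1.2.2 j, x.1.2.1 (x.1.1 j)], by
      have := (monotone_toLex_iff_compatible x.1.2.2 (x.1.2.1 ∘ x.1.1)).2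
      rw [sort_comp_eq_inv x.2.1.1, inv_inv] at this
      simpa using this x.2.2.1, by
      simp [bidegree, Equiv.sum_comp x.1.1 x.1.2.1, x.2.1.2, x.2.2.2]⟩
  left_inv S := by
    ext j k
    fin_cases k <;> simp
  right_inv := by
    rintro ⟨⟨σ, c, a⟩, ⟨hc, -⟩, -⟩
    have hs : (Tuple.sort fun j => c (σ j)) = σ⁻¹ := sort_comp_eq_inv hc
    ext : 1
    simp [hs, Function.comp_def]

def sortedSigmaEquiv (b : ℕ × ℕ) :
    {S : Fin n → Seq 2 // Monotone (fun j => toLex (S j 0, S j 1)) ∧ bidegree S = b} ≃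
      Σ σ : Equiv.Perm (Fin n), {c : Fin n → ℕ // Compatible σ⁻¹ c ∧ ∑ i, c i = b.1} ×
        {a : Fin n → ℕ // Compatible σ a ∧ ∑ i, a i = b.2} :=
  (sortedEquiv b).trans ((Equiv.subtypeProdEquivSigmaSubtype fun (σ : Equiv.Perm (Fin n))
      (y : (Fin n → ℕ) × (Fin n → ℕ)) =>
        (Compatible σ⁻¹ y.1 ∧ ∑ i, y.1 i = b.1) ∧ (Compatible σ y.2 ∧ ∑ i, y.2 i = b.2)).trans
    (Equiv.sigmaCongrRight fun σ => Equiv.subtypeProdEquivProd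
      (p := fun c => Compatible σ⁻¹ c ∧ ∑ i, c i = b.1)
      (q := fun a => Compatible σ a ∧ ∑ i, a i = b.2)))

instance finite_sorted_of_bidegree_eq (b : ℕ × ℕ) :
    Finite {S : Fin n → Seq 2 // Monotone (fun j => toLex (S j 0, S j 1)) ∧ bidegree S = b} :=
  Finite.of_equiv _ (sortedSigmaEquiv b).symm

lemma card_sorted (b : ℕ × ℕ) :
    Nat.card {S : Fin n → Seq 2 // Monotone (fun j => toLex (S j 0, S j 1)) ∧ bidegree S = b} =
      ∑ σ : Equiv.Perm (Fin n), Nat.card {c : Fin n → ℕ // Compatible σ⁻¹ c ∧ ∑ i, c i = b.1} *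
        Nat.card {a : Fin n → ℕ // Compatible σ a ∧ ∑ i, a i = b.2} := by
  simp only [Nat.card_congr (sortedSigmaEquiv b), Nat.card_sigma, Nat.card_prod]

end Standardization

section GeneratingFunctions

open Finset

variable {n : ℕ}

lemma expOf_eq_iff (S : Fin n → Seq 2) (d : Fin 2 →₀ ℕ) :
    expOf S = d ↔ bidegree S = (d 0, d 1) := by
  rw [expOf, Equiv.symm_apply_eq, funext_iff, Fin.forall_fin_two, bidegree, Prod.mk.injEq]
  rfl

lemma sum_sum_eq_iff_bidegree_mem (S : Fin n → Seq 2) (m : ℕ) :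
    ∑ j, ∑ c, S j c = m ↔ bidegree S ∈ antidiagonal m := by
  simp [bidegree, Fin.sum_univ_two, sum_add_distrib, add_comm]

lemma pochOne_eq_ofVar {r : ℕ} (n : ℕ) (i : Fin r) : pochOne n i = ofVar i (qPochhammer n) := by
  simp only [pochOne, qPochhammer, map_prod, map_sub, map_one, map_pow, ofVar_X]

lemma countSeries_sorted_eq_sum_ofVar_mul :
    countSeries (fun S : Fin n → Seq 2 =>
        ∀ i ∈ Icc 1 (n - 1), lexLe (sget S i) (sget S (i + 1))) =
      ∑ σ : Equiv.Perm (Fin n), ofVar 0 (compatSeries σ⁻¹) * ofVar 1 (compatSeries σ) := by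
  ext d
  have hd : d = Finsupp.single 0 (d 0) + Finsupp.single 1 (d 1) := by
    ext i; fin_cases i <;> simp
  rw [map_sum]
  conv_rhs => enter [2, σ]; rw [hd, coeff_ofVar_mul_ofVar zero_ne_one]
  change (Nat.card _ : ℤ) = _
  rw [Nat.card_congr (Equiv.subtypeEquivRight fun S =>
    and_congr (sorted_iff_monotone S) (expOf_eq_iff S d)), card_sorted]
  simp [compatSeries]

lemma mk_card_sorted_eq_sum_compatSeries_mul :
    PowerSeries.mk (fun d =>
        (Nat.card {S : Fin n → Seq 2 //
          (∀ i ∈ Icc 1 (n - 1), lexLe (sget S i) (sget S (i + 1))) ∧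
          (∑ j : Fin n, ∑ c : Fin 2, S j c) = d} : ℤ)) =
      ∑ σ : Equiv.Perm (Fin n), compatSeries σ⁻¹ * compatSeries σ := by
  ext m
  rw [PowerSeries.coeff_mk, map_sum, Nat.card_congr (Equiv.subtypeEquivRight fun S =>
    and_congr (sorted_iff_monotone S) (sum_sum_eq_iff_bidegree_mem S m)), card_eq_sum_card_fiber]
  simp only [card_sorted, PowerSeries.coeff_mul, compatSeries, PowerSeries.coeff_mk]
  push_cast
  exact sum_comm

end GeneratingFunctions

theorem two_variable_case_general (n : ℕ) :
    (pochAll n 2 * countSeries (fun S : Fin n → Seq 2 =>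
          ∀ i ∈ Finset.Icc 1 (n-1), lexLe (sget S i) (sget S (i+1))) =
        ∑ σ : Equiv.Perm (Fin n),
          MvPowerSeries.monomial (R := ℤ)
            (Finsupp.equivFunOnFinite.symm
              (fun i : Fin 2 => if i = 0 then comajP σ⁻¹ else comajP σ)) 1) ∧
    ((∏ j ∈ Finset.Icc 1 n, (1 - (PowerSeries.X : PowerSeries ℤ) ^ j)) ^ 2 *
        PowerSeries.mk (fun d =>
          (Nat.card {S : Fin n → Seq 2 //
            (∀ i ∈ Finset.Icc 1 (n-1), lexLe (sget S i) (sget S (i+1))) ∧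
            (∑ j : Fin n, ∑ c : Fin 2, S j c) = d} : ℤ)) =
      ∑ σ : Equiv.Perm (Fin n), PowerSeries.monomial (R := ℤ) (comajP σ + comajP σ⁻¹) 1) := by
  constructor
  · rw [countSeries_sorted_eq_sum_ofVar_mul, pochAll, Fin.prod_univ_two, pochOne_eq_ofVar,
      pochOne_eq_ofVar, Finset.mul_sum]
    refine Finset.sum_congr rfl fun σ _ => ?_
    rw [mul_mul_mul_comm, ← map_mul, ← map_mul, qPochhammer_mul_compatSeries,
      qPochhammer_mul_compatSeries, map_pow, map_pow, ofVar_X, ofVar_X, MvPowerSeries.X_pow_eq,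
      MvPowerSeries.X_pow_eq, MvPowerSeries.monomial_mul_monomial, one_mul]
    congr 2
    ext i
    fin_cases i <;> simp
  · rw [mk_card_sorted_eq_sum_compatSeries_mul, ← qPochhammer, Finset.mul_sum]
    refine Finset.sum_congr rfl fun σ _ => ?_
    rw [sq, mul_mul_mul_comm, qPochhammer_mul_compatSeries, qPochhammer_mul_compatSeries,
      ← pow_add, add_comm, PowerSeries.X_pow_eq]

/-- **Corollary (two-variable case).**
`(q_1;q_1)_n (q_2;q_2)_n h_n[1/((1−q_1)(1−q_2))] = ∑_{σ ∈ S_n} q_1^{comaj(σ⁻¹)} q_2^{comaj(σ)}`,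
and consequently `((q;q)_n)² h_n[1/(1−q)²] = ∑_{σ ∈ S_n} q^{comaj(σ) + comaj(σ⁻¹)}`. -/
theorem two_variable_case (n : ℕ) (hn : 1 ≤ n) :
    (pochAll n 2 * countSeries (fun S : Fin n → Seq 2 =>
          ∀ i ∈ Finset.Icc 1 (n-1), lexLe (sget S i) (sget S (i+1))) =
        ∑ σ : Equiv.Perm (Fin n),
          MvPowerSeries.monomial (R := ℤ)
            (Finsupp.equivFunOnFinite.symm
              (fun i : Fin 2 => if i = 0 then comajP σ⁻¹ else comajP σ)) 1) ∧
    ((∏ j ∈ Finset.Icc 1 n, (1 - (PowerSeries.X : PowerSeries ℤ) ^ j)) ^ 2 *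
        PowerSeries.mk (fun d =>
          (Nat.card {S : Fin n → Seq 2 //
            (∀ i ∈ Finset.Icc 1 (n-1), lexLe (sget S i) (sget S (i+1))) ∧
            (∑ j : Fin n, ∑ c : Fin 2, S j c) = d} : ℤ)) =
      ∑ σ : Equiv.Perm (Fin n), PowerSeries.monomial (R := ℤ) (comajP σ + comajP σ⁻¹) 1) :=
  two_variable_case_general n

end

end RomeroComaj
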